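/- Let Φ be a Young function in ∇₂ with constant k > 1. Then there is a constant C such that for every t > 0, (1/t)·Φ⁻¹(1/t)^{-1}·∫₀^t Φ⁻¹(1/s) ds ≤ C. -/

import Mathlib

/-!
Split `(0, t]` into the intervals `(t/c^(n+1), t/c^n]` with `c = 2k`. The `∇₂` condition gives
`Φ⁻¹(c u) ≤ k Φ⁻¹(u)`, so on the `n`-th interval `Φ⁻¹(1/s) ≤ k^(n+1) Φ⁻¹(1/t)`, while the interval
has length at most `t/c^n`. The pieces of the integral therefore decay like `(k/c)^n = 2^(-n)`, and
summing the geometric series bounds the integral by `2k · t · Φ⁻¹(1/t)`.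
-/

open MeasureTheory ENNReal NNReal

noncomputable section

/-- A Young function `Φ : [0,∞] → [0,∞]`: increasing, convex, `Φ(0)=0`, `Φ(∞)=∞`,
`lim_{t→0}Φ(t)=0`, with `a(Φ)<∞` and `b(Φ)>0`. -/
structure YoungFunction (Φ : ℝ≥0∞ → ℝ≥0∞) : Prop where
  mono : Monotone Φ
  map_zero : Φ 0 = 0
  map_top : Φ ⊤ = ⊤
  convex : ∀ (a b : ℝ≥0) (x y : ℝ≥0∞), a + b = 1 →
    Φ ((a : ℝ≥0∞) * x + (b : ℝ≥0∞) * y) ≤ (a : ℝ≥0∞) * Φ x + (b : ℝ≥0∞) * Φ y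
  tendsto_zero : Filter.Tendsto Φ (nhdsWithin 0 (Set.Ioi 0)) (nhds 0)
  exists_pos : ∃ t : ℝ≥0∞, t ≠ ⊤ ∧ 0 < Φ t
  exists_finite : ∃ t : ℝ≥0∞, 0 < t ∧ Φ t < ⊤

/-- The generalized inverse `Φ⁻¹(u) = inf{t ≥ 0 : Φ(t) > u}` (with `inf ∅ = ∞`,
so `Φ⁻¹(∞) = ∞`). -/
def yinv (Φ : ℝ≥0∞ → ℝ≥0∞) (u : ℝ≥0∞) : ℝ≥0∞ := sInf {t | u < Φ t}

open Set

lemma yinv_mono (Φ : ℝ≥0∞ → ℝ≥0∞) : Monotone (yinv Φ) := fun _ _ huv =>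
  sInf_le_sInf fun _ ht => huv.trans_lt ht

lemma yinv_mul_le {Φ : ℝ≥0∞ → ℝ≥0∞} {c k : ℝ≥0} (hc : c ≠ 0) (hk : k ≠ 0)
    (h : ∀ r, c * Φ r ≤ Φ (k * r)) (u : ℝ≥0∞) : yinv Φ (c * u) ≤ k * yinv Φ u := by
  rw [← ENNReal.inv_mul_le_iff (by simpa) coe_ne_top]
  refine le_sInf fun r (hr : u < Φ r) => ?_
  rw [ENNReal.inv_mul_le_iff (by simpa) coe_ne_top]
  exact sInf_le ((ENNReal.mul_lt_mul_right (by simpa) coe_ne_top hr).trans_le (h r))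

lemma antitone_yinv_inv_ofReal (Φ : ℝ≥0∞ → ℝ≥0∞) :
    Antitone fun s : ℝ => yinv Φ (ENNReal.ofReal s)⁻¹ := fun _ _ h =>
  yinv_mono Φ (ENNReal.inv_le_inv.2 (ENNReal.ofReal_le_ofReal h))

lemma yinv_inv_ofReal_div_le {Φ : ℝ≥0∞ → ℝ≥0∞} {c k : ℝ≥0} (hc : c ≠ 0) (hk : k ≠ 0)
    (h : ∀ r, c * Φ r ≤ Φ (k * r)) (s : ℝ) :
    yinv Φ (ENNReal.ofReal (s / c))⁻¹ ≤ k * yinv Φ (ENNReal.ofReal s)⁻¹ := by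
  rw [ENNReal.ofReal_div_of_pos (by positivity), ENNReal.ofReal_coe_nnreal,
    ENNReal.inv_div (Or.inl coe_ne_top) (Or.inl (by simpa using hc)), div_eq_mul_inv]
  exact yinv_mul_le hc hk h _

lemma Ioc_zero_subset_iUnion_Ioc_div_pow {c : ℝ} (hc : 1 < c) (t : ℝ) :
    Ioc 0 t ⊆ ⋃ n : ℕ, Ioc (t / c ^ (n + 1)) (t / c ^ n) := by
  rintro s ⟨hs0, hst⟩
  obtain ⟨n, hn, hn'⟩ := exists_nat_pow_near ((one_le_div hs0).2 hst) hc
  refine mem_iUnion.2 ⟨n, ?_, ?_⟩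
  · rwa [div_lt_iff₀ (by positivity), mul_comm, ← div_lt_iff₀ hs0]
  · rwa [le_div_iff₀ (by positivity), mul_comm, ← le_div_iff₀ hs0]

lemma le_pow_mul_of_div_le {g : ℝ → ℝ≥0∞} {c : ℝ≥0} {k : ℝ≥0∞} (hc : 0 < c)
    (hscale : ∀ s, 0 < s → g (s / c) ≤ k * g s) {t : ℝ} (ht : 0 < t) (n : ℕ) :
    g (t / (c : ℝ) ^ n) ≤ k ^ n * g t := by
  induction n with
  | zero => simp
  | succ n ih =>
    calc g (t / (c : ℝ) ^ (n + 1)) = g (t / (c : ℝ) ^ n / c) := by rw [pow_succ, div_div]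
      _ ≤ k * g (t / (c : ℝ) ^ n) := hscale _ (by positivity)
      _ ≤ k * (k ^ n * g t) := by gcongr
      _ = k ^ (n + 1) * g t := by ring

theorem lintegral_Ioc_zero_le_of_div_le {g : ℝ → ℝ≥0∞} (hg : Antitone g) {c : ℝ≥0} {k : ℝ≥0∞}
    (hc : 1 < c) (hscale : ∀ s, 0 < s → g (s / c) ≤ k * g s) {t : ℝ} (ht : 0 < t) :
    ∫⁻ s in Ioc 0 t, g s ≤ k * (1 - k / c)⁻¹ * ENNReal.ofReal t * g t := by
  have hc0 : (0 : ℝ) < c := zero_lt_one.trans hc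
  have piece (n : ℕ) : ∫⁻ s in Ioc (t / (c : ℝ) ^ (n + 1)) (t / (c : ℝ) ^ n), g s ≤
      k * (k / c) ^ n * (ENNReal.ofReal t * g t) := by
    calc ∫⁻ s in Ioc (t / (c : ℝ) ^ (n + 1)) (t / (c : ℝ) ^ n), g s
        ≤ ∫⁻ _ in Ioc (t / (c : ℝ) ^ (n + 1)) (t / (c : ℝ) ^ n), g (t / (c : ℝ) ^ (n + 1)) :=
          setLIntegral_mono measurable_const fun s hs => hg hs.1.le
      _ = g (t / (c : ℝ) ^ (n + 1)) * ENNReal.ofReal (t / c ^ n - t / c ^ (n + 1)) := by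
          rw [setLIntegral_const, Real.volume_Ioc]
      _ ≤ k ^ (n + 1) * g t * ENNReal.ofReal (t / c ^ n) := by
          gcongr
          · exact le_pow_mul_of_div_le hc0 hscale ht _
          · exact sub_le_self _ (by positivity)
      _ = k * (k / c) ^ n * (ENNReal.ofReal t * g t) := by
          rw [ENNReal.ofReal_div_of_pos (by positivity), ENNReal.ofReal_pow hc0.le,
            ENNReal.ofReal_coe_nnreal]
          simp only [div_eq_mul_inv, mul_pow, ENNReal.inv_pow]
          ring
  calc ∫⁻ s in Ioc 0 t, g s
      ≤ ∫⁻ s in ⋃ n : ℕ, Ioc (t / (c : ℝ) ^ (n + 1)) (t / (c : ℝ) ^ n), g s :=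
        lintegral_mono_set (Ioc_zero_subset_iUnion_Ioc_div_pow hc t)
    _ ≤ ∑' n : ℕ, ∫⁻ s in Ioc (t / (c : ℝ) ^ (n + 1)) (t / (c : ℝ) ^ n), g s :=
        lintegral_iUnion_le _ _
    _ ≤ ∑' n : ℕ, k * (k / c) ^ n * (ENNReal.ofReal t * g t) := ENNReal.tsum_le_tsum piece
    _ = k * (1 - k / c)⁻¹ * ENNReal.ofReal t * g t := by
        rw [ENNReal.tsum_mul_right, ENNReal.tsum_mul_left, ENNReal.tsum_geometric]
        ring

lemma ENNReal.mul_one_sub_div_two_mul_inv {k : ℝ≥0∞} (hk0 : k ≠ 0) (hk : k ≠ ⊤) :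
    k * (1 - k / (2 * k))⁻¹ = 2 * k := by
  rw [div_eq_mul_inv, ENNReal.mul_inv (by simp) (by simp), mul_left_comm,
    ENNReal.mul_inv_cancel hk0 hk, mul_one, ENNReal.one_sub_inv_two, inv_inv, mul_comm]

lemma ENNReal.inv_mul_inv_mul_le {a b : ℝ≥0∞} (C : ℝ≥0∞) (ha0 : a ≠ 0) (ha : a ≠ ⊤) :
    a⁻¹ * b⁻¹ * (C * a * b) ≤ C :=
  calc a⁻¹ * b⁻¹ * (C * a * b) = C * (a⁻¹ * a) * (b⁻¹ * b) := by ring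
    _ ≤ C := by
      rw [ENNReal.inv_mul_cancel ha0 ha, mul_one]
      exact mul_le_of_le_one_right' (ENNReal.inv_mul_le_one b)

theorem stmt15_general (Φ : ℝ≥0∞ → ℝ≥0∞) (k : ℝ≥0) (hk : 1 < k)
    (hnabla : ∀ r : ℝ≥0∞, Φ r ≤ (1 / (2 * (k : ℝ≥0∞))) * Φ ((k : ℝ≥0∞) * r)) :
    ∃ C : ℝ≥0∞, C ≠ ⊤ ∧ ∀ t : ℝ, 0 < t →
      (ENNReal.ofReal t)⁻¹ * (yinv Φ (ENNReal.ofReal t)⁻¹)⁻¹ *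
        (∫⁻ s in Set.Ioo (0 : ℝ) t, yinv Φ (ENNReal.ofReal s)⁻¹) ≤ C := by
  have hk0 : k ≠ 0 := (zero_lt_one.trans hk).ne'
  have hdouble (r : ℝ≥0∞) : ((2 * k : ℝ≥0) : ℝ≥0∞) * Φ r ≤ Φ (k * r) := by
    push_cast
    calc 2 * k * Φ r ≤ 2 * k * ((2 * k : ℝ≥0∞)⁻¹ * Φ (k * r)) := by
          gcongr
          simpa only [one_div] using hnabla r
      _ = Φ (k * r) := ENNReal.mul_inv_cancel_left (by simpa using hk0) (by finiteness)
  refine ⟨2 * k, by finiteness, fun t ht => ?_⟩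
  have hint := lintegral_Ioc_zero_le_of_div_le (antitone_yinv_inv_ofReal Φ)
    (hk.trans_le (le_mul_of_one_le_left' one_le_two))
    (fun s _ => yinv_inv_ofReal_div_le (by simpa using hk0) hk0 hdouble s) ht
  rw [coe_mul, coe_ofNat, ENNReal.mul_one_sub_div_two_mul_inv (by simpa using hk0) coe_ne_top]
    at hint
  calc _ ≤ (ENNReal.ofReal t)⁻¹ * (yinv Φ (ENNReal.ofReal t)⁻¹)⁻¹ *
        (2 * k * ENNReal.ofReal t * yinv Φ (ENNReal.ofReal t)⁻¹) := by
        gcongr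
        exact (lintegral_mono_set Ioo_subset_Ioc_self).trans hint
    _ ≤ 2 * k := ENNReal.inv_mul_inv_mul_le _ (by simpa using ht) ofReal_ne_top

/-- if `Φ ∈ ∇₂`, then `(1/t)Φ⁻¹(1/t)⁻¹ ∫₀ᵗ Φ⁻¹(1/s) ds` is bounded. -/
theorem stmt15 (Φ : ℝ≥0∞ → ℝ≥0∞) (hΦ : YoungFunction Φ) (k : ℝ≥0) (hk : 1 < k)
    (hnabla : ∀ r : ℝ≥0∞, Φ r ≤ (1 / (2 * (k : ℝ≥0∞))) * Φ ((k : ℝ≥0∞) * r)) :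
    ∃ C : ℝ≥0∞, C ≠ ⊤ ∧ ∀ t : ℝ, 0 < t →
      (ENNReal.ofReal t)⁻¹ * (yinv Φ (ENNReal.ofReal t)⁻¹)⁻¹ *
        (∫⁻ s in Set.Ioo (0 : ℝ) t, yinv Φ (ENNReal.ofReal s)⁻¹) ≤ C :=
  stmt15_general Φ k hk hnabla
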